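/- arXiv:1502.07264 — 4 statements merged into one kernel-verified Lean document; each statement's English description precedes it below -/
import Mathlib

section
/- Let {u_k}_{k≥0} be a sequence of nonnegative reals satisfying u_k ≤ μ^k u_0 + A Σ_{j=0}^{k-1} μ^j u_{k-1-j}^2 for all k ≥ 1, where 0 < μ < 1 and A > 0. Then there exist positive constants η₀ and η such that if 0 ≤ u_0 ≤ η₀, then u_k ≤ η μ^k for all k ≥ 0. -/
/-!
Make the ansatz `u k ≤ η * μ ^ k` and prove it by strong induction. Feeding the ansatz into the
quadratic term gives `∑ j < k + 1, μ ^ j * u (k - j) ^ 2 ≤ η ^ 2 * μ ^ k * ∑ j < k + 1, μ ^ j`,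
and the geometric sum is at most `1 / (1 - μ)`; so the ansatz propagates as soon as
`η₀ + A * η ^ 2 / (μ * (1 - μ)) ≤ η`, which holds for `η = μ * (1 - μ) / (2 * A)`, `η₀ = η / 2`.
-/

open Finset

lemma sum_range_pow_mul_sq_le {μ η : ℝ} (hμ0 : 0 ≤ μ) (hμ1 : μ < 1) {v : ℕ → ℝ} (k : ℕ)
    (hv0 : ∀ j ≤ k, 0 ≤ v j) (hv : ∀ j ≤ k, v j ≤ η * μ ^ j) :
    ∑ j ∈ range (k + 1), μ ^ j * v (k - j) ^ 2 ≤ η ^ 2 * μ ^ k / (1 - μ) := by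
  have hterm : ∀ j ∈ range (k + 1), μ ^ j * v (k - j) ^ 2 ≤ η ^ 2 * μ ^ k * μ ^ (k - j) := by
    intro j hj
    have hjk : j ≤ k := Nat.lt_succ_iff.mp (mem_range.mp hj)
    have hsq : v (k - j) ^ 2 ≤ (η * μ ^ (k - j)) ^ 2 :=
      pow_le_pow_left₀ (hv0 _ (Nat.sub_le k j)) (hv _ (Nat.sub_le k j)) 2
    calc μ ^ j * v (k - j) ^ 2 ≤ μ ^ j * (η * μ ^ (k - j)) ^ 2 := by gcongr
      _ = η ^ 2 * (μ ^ j * μ ^ (k - j)) * μ ^ (k - j) := by ring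
      _ = η ^ 2 * μ ^ k * μ ^ (k - j) := by rw [pow_mul_pow_sub μ hjk]
  calc ∑ j ∈ range (k + 1), μ ^ j * v (k - j) ^ 2
      ≤ ∑ j ∈ range (k + 1), η ^ 2 * μ ^ k * μ ^ (k - j) := sum_le_sum hterm
    _ = η ^ 2 * μ ^ k * ∑ j ∈ range (k + 1), μ ^ j := by
      rw [← mul_sum, ← sum_range_reflect (μ ^ ·) (k + 1), Nat.add_sub_cancel]
    _ ≤ η ^ 2 * μ ^ k * (μ ^ 0 / (1 - μ)) := by
      rw [range_eq_Ico]
      exact mul_le_mul_of_nonneg_left (geom_sum_Ico_le_of_lt_one hμ0 hμ1) (by positivity)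
    _ = η ^ 2 * μ ^ k / (1 - μ) := by ring

theorem le_mul_pow_of_le_pow_mul_add_sum_sq {μ A η₀ η : ℝ} (hμ0 : 0 < μ) (hμ1 : μ < 1)
    (hA : 0 ≤ A) (hη : η₀ + A * η ^ 2 / (μ * (1 - μ)) ≤ η) {u : ℕ → ℝ} (hu : ∀ k, 0 ≤ u k)
    (hrec : ∀ k : ℕ, 1 ≤ k →
      u k ≤ μ ^ k * u 0 + A * ∑ j ∈ range k, μ ^ j * u (k - 1 - j) ^ 2)
    (hu0 : u 0 ≤ η₀) (k : ℕ) : u k ≤ η * μ ^ k := by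
  have h1μ : 0 < 1 - μ := sub_pos.mpr hμ1
  induction k using Nat.strong_induction_on with
  | _ k ih =>
    match k with
    | 0 => simpa using hu0.trans (le_of_add_le_of_nonneg_left hη (by positivity))
    | k + 1 =>
      have hsum := sum_range_pow_mul_sq_le hμ0.le hμ1 k (fun j _ => hu j)
        (fun j hj => ih j (Nat.lt_succ_of_le hj))
      calc u (k + 1) ≤ μ ^ (k + 1) * u 0 + A * ∑ j ∈ range (k + 1), μ ^ j * u (k - j) ^ 2 := by
            simpa using hrec (k + 1) k.succ_pos
        _ ≤ μ ^ (k + 1) * η₀ + A * (η ^ 2 * μ ^ k / (1 - μ)) := by gcongr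
        _ = μ ^ (k + 1) * (η₀ + A * η ^ 2 / (μ * (1 - μ))) := by
          field_simp
          ring
        _ ≤ η * μ ^ (k + 1) := by
          rw [mul_comm η]
          gcongr

/-- Nonlinear discrete stability lemma: a nonnegative sequence satisfying a
geometric-plus-quadratic recursive bound decays geometrically, provided the
initial value is small enough. -/
theorem nonlinear_discrete_stability (μ A : ℝ) (hμ0 : 0 < μ) (hμ1 : μ < 1) (hA : 0 < A) :
    ∃ η₀ > (0 : ℝ), ∃ η > (0 : ℝ), ∀ u : ℕ → ℝ,
      (∀ k, 0 ≤ u k) →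
      (∀ k : ℕ, 1 ≤ k →
        u k ≤ μ ^ k * u 0 + A * ∑ j ∈ Finset.range k, μ ^ j * (u (k - 1 - j)) ^ 2) →
      u 0 ≤ η₀ → ∀ k, u k ≤ η * μ ^ k := by
  have h1μ : 0 < 1 - μ := sub_pos.mpr hμ1
  set η := μ * (1 - μ) / (2 * A) with hη_def
  have hη : η / 2 + A * η ^ 2 / (μ * (1 - μ)) = η := by
    rw [hη_def]
    field_simp
    ring
  exact ⟨η / 2, by positivity, η, by positivity, fun u hu hrec hu0 =>
    le_mul_pow_of_le_pow_mul_add_sum_sq hμ0 hμ1 hA.le hη.le hu hrec hu0⟩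
end

section
/- For fixed η > 0, set f(ξ) = ξ·exp(−Aξ/(μ(1−μ))) and η₀ = f(η). If a nonnegative sequence {u_k} satisfies u_k ≤ μ^k u_0 + A Σ_{j=0}^{k-1} μ^j u_{k-1-j}^2 for k ≥ 1 with u_0 ≤ η₀, then u_k ≤ η μ^k for all k. -/
/-!
Divide out the decay, `v k = u k / μ ^ k`. As long as the claimed bound `u m ≤ η μ ^ m` holds for
`m < k`, one factor of each square `u m ^ 2` can be replaced by `η μ ^ m`, and the recursion becomes
the *linear* inequality `v k ≤ u 0 + ∑_{m < k} a m * v m` with `a m = (A η / μ) μ ^ m`. The discrete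
Grönwall inequality then gives `v k ≤ u 0 ∏_{m < k} (1 + a m) ≤ u 0 exp (A η / (μ (1 - μ)))`, which
is at most `η` exactly because `u 0 ≤ η₀`; so the bound propagates to `k` by strong induction.
-/

open Finset Real

theorem discrete_gronwall_sum {R : Type*} [CommSemiring R] [PartialOrder R] [IsOrderedRing R]
    {v a : ℕ → R} {c : R} {N : ℕ} (ha : ∀ m, 0 ≤ a m)
    (hv : ∀ k ≤ N, v k ≤ c + ∑ m ∈ range k, a m * v m) :
    v N ≤ c * ∏ m ∈ range N, (1 + a m) := by
  have hsum : ∀ n ≤ N, c + ∑ m ∈ range n, a m * v m ≤ c * ∏ m ∈ range n, (1 + a m) := by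
    intro n hn
    induction n with
    | zero => simp
    | succ n ih =>
      have ih := ih (by omega)
      calc c + ∑ m ∈ range (n + 1), a m * v m
          = (c + ∑ m ∈ range n, a m * v m) + a n * v n := by rw [sum_range_succ, add_assoc]
        _ ≤ (c + ∑ m ∈ range n, a m * v m) + a n * (c + ∑ m ∈ range n, a m * v m) := by
          gcongr
          · exact ha n
          · exact hv n (by omega)
        _ = (1 + a n) * (c + ∑ m ∈ range n, a m * v m) := by ring
        _ ≤ (1 + a n) * (c * ∏ m ∈ range n, (1 + a m)) := by
          gcongr
          exact add_nonneg zero_le_one (ha n)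
        _ = c * ∏ m ∈ range (n + 1), (1 + a m) := by rw [prod_range_succ]; ring
  exact (hv N le_rfl).trans (hsum N le_rfl)

theorem prod_one_add_mul_geom_le_exp {b μ : ℝ} (hb : 0 ≤ b) (hμ0 : 0 ≤ μ) (hμ1 : μ < 1) (n : ℕ) :
    ∏ m ∈ range n, (1 + b * μ ^ m) ≤ exp (b / (1 - μ)) := by
  have hgeom : ∑ m ∈ range n, μ ^ m ≤ 1 / (1 - μ) := by
    have := geom_sum_Ico_le_of_lt_one (m := 0) (n := n) hμ0 hμ1
    rwa [← range_eq_Ico, pow_zero] at this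
  calc ∏ m ∈ range n, (1 + b * μ ^ m)
      ≤ exp (∑ m ∈ range n, b * μ ^ m) := prod_one_add_le_exp_sum _ fun m => by positivity
    _ ≤ exp (b / (1 - μ)) := by
      rw [← mul_sum, div_eq_mul_one_div b]
      gcongr

theorem sum_pow_mul_sq_le {μ η : ℝ} (hμ0 : 0 ≤ μ) {u : ℕ → ℝ} {k : ℕ}
    (hpos : ∀ m, 0 ≤ u m) (hbound : ∀ m < k, u m ≤ η * μ ^ m) :
    ∑ j ∈ range k, μ ^ j * u (k - 1 - j) ^ 2 ≤ η * μ ^ (k - 1) * ∑ m ∈ range k, u m := by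
  rw [← sum_range_reflect, mul_sum]
  refine sum_le_sum fun m hm => ?_
  have hmk : m < k := mem_range.mp hm
  rw [show k - 1 - (k - 1 - m) = m by omega]
  calc μ ^ (k - 1 - m) * u m ^ 2
      = μ ^ (k - 1 - m) * u m * u m := by ring
    _ ≤ μ ^ (k - 1 - m) * u m * (η * μ ^ m) :=
      mul_le_mul_of_nonneg_left (hbound m hmk) (mul_nonneg (pow_nonneg hμ0 _) (hpos m))
    _ = η * μ ^ (k - 1) * u m := by
      rw [← pow_sub_mul_pow μ (show m ≤ k - 1 by omega)]
      ring

theorem div_pow_le_add_sum_of_le {μ A η : ℝ} (hμ0 : 0 < μ) (hA : 0 ≤ A) {u : ℕ → ℝ} {k : ℕ}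
    (hpos : ∀ m, 0 ≤ u m)
    (hrec : 1 ≤ k →
      u k ≤ μ ^ k * u 0 + A * ∑ j ∈ range k, μ ^ j * (u (k - 1 - j)) ^ 2)
    (hbound : ∀ m < k, u m ≤ η * μ ^ m) :
    u k / μ ^ k ≤ u 0 + ∑ m ∈ range k, (A * η / μ * μ ^ m) * (u m / μ ^ m) := by
  rcases Nat.eq_zero_or_pos k with rfl | hk
  · simp
  have hμk : 0 < μ ^ k := pow_pos hμ0 k
  rw [div_le_iff₀ hμk]
  calc u k
      ≤ μ ^ k * u 0 + A * ∑ j ∈ range k, μ ^ j * (u (k - 1 - j)) ^ 2 := hrec hk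
    _ ≤ μ ^ k * u 0 + A * (η * μ ^ (k - 1) * ∑ m ∈ range k, u m) := by
      gcongr
      exact sum_pow_mul_sq_le hμ0.le hpos hbound
    _ = (u 0 + ∑ m ∈ range k, (A * η / μ * μ ^ m) * (u m / μ ^ m)) * μ ^ k := by
      rw [← pow_sub_mul_pow μ (show 1 ≤ k from hk), add_mul, sum_mul, mul_sum, mul_sum]
      congr 1
      · ring
      · refine sum_congr rfl fun m _ => ?_
        field_simp

/-- Quantitative nonlinear Gronwall-type lemma: with `f ξ = ξ exp (-A ξ / (μ (1 - μ)))`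
and `η₀ = f η`, if `u 0 ≤ η₀` then `u k ≤ η μ^k` for all `k`. -/
theorem nonlinear_discrete_stability_quantitative (μ A η : ℝ)
    (hμ0 : 0 < μ) (hμ1 : μ < 1) (hA : 0 < A) (hη : 0 < η)
    (u : ℕ → ℝ) (hpos : ∀ k, 0 ≤ u k)
    (hrec : ∀ k : ℕ, 1 ≤ k →
      u k ≤ μ ^ k * u 0 + A * ∑ j ∈ Finset.range k, μ ^ j * (u (k - 1 - j)) ^ 2)
    (h0 : u 0 ≤ η * Real.exp (-(A * η) / (μ * (1 - μ)))) :
    ∀ k, u k ≤ η * μ ^ k := by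
  have hgrowth : ∀ n, u 0 * ∏ m ∈ range n, (1 + A * η / μ * μ ^ m) ≤ η := fun n =>
    calc u 0 * ∏ m ∈ range n, (1 + A * η / μ * μ ^ m)
        ≤ η * exp (-(A * η) / (μ * (1 - μ))) * exp (A * η / μ / (1 - μ)) :=
          mul_le_mul h0 (prod_one_add_mul_geom_le_exp (by positivity) hμ0.le hμ1 n)
            (prod_nonneg fun m _ => by positivity) (by positivity)
      _ = η := by rw [mul_assoc, ← exp_add, div_div, neg_div, neg_add_cancel, exp_zero, mul_one]
  intro k
  induction k using Nat.strong_induction_on with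
  | _ k ih =>
    have hlin : ∀ n ≤ k, u n / μ ^ n ≤ u 0 + ∑ m ∈ range n, (A * η / μ * μ ^ m) * (u m / μ ^ m) :=
      fun n hn => div_pow_le_add_sum_of_le hμ0 hA.le hpos (hrec n) fun m hm => ih m (by omega)
    have hk := (discrete_gronwall_sum (fun m => by positivity) hlin).trans (hgrowth k)
    rwa [div_le_iff₀ (pow_pos hμ0 k)] at hk
end

section
/- Let f : [0,1] → [0,1] be C², F = max_{x∈[0,1]} |f′(x)| > 1, and Γ a connected graph whose normalized Laplacian has positive eigenvalues λ_2 ≤ ... ≤ λ_n satisfying λ_n/λ_2 < 1 + 1/F. Then for any ε ∈ (λ_2^{-1}(1 − 1/F), λ_n^{-1}(1 + 1/F)), the diagonal (synchronous) subspace D = span{1_n} is locally asymptotically stable for the coupled map system x_{k+1} = (I − εL) f(x_k) (applied componentwise): there exists δ > 0 such that dist(x_0, D) < δ implies dist(x_k, D) → 0 as k → ∞. -/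
/-!
Weight the coordinates by the degrees `dᵢ`. Then `L = I - D⁻¹A` is self-adjoint for
`⟪u, v⟫_d = ∑ dᵢ uᵢ vᵢ`, its kernel consists of the constants because the graph is connected,
and on the `d`-orthogonal complement of the constants `I - εL` contracts by
`γ = max |1 - ελ|` over the nonzero eigenvalues `λ`, which the window for `ε` makes smaller
than `1 / F`. As `f` is `F`-Lipschitz, the `d`-weighted variance of the state, i.e. its squared
`d`-distance to the diagonal, shrinks by the factor `(γF)² < 1` at every step; since `dᵢ ≥ 1`
it dominates the squared Euclidean distance to the diagonal.
-/

open Matrix Set Finset Filter Topology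

open scoped NNReal RealInnerProductSpace

theorem Convex.lipschitzOnWith_of_nnnorm_deriv_le_of_interior {f : ℝ → ℝ} {s : Set ℝ} {C : ℝ≥0}
    (hs : Convex ℝ s) (hfc : ContinuousOn f s) (hfd : DifferentiableOn ℝ f (interior s))
    (bound : ∀ x ∈ interior s, ‖deriv f x‖₊ ≤ C) : LipschitzOnWith C f s := by
  refine LipschitzOnWith.of_dist_le_mul fun x hx y hy => ?_
  wlog hxy : x ≤ y generalizing x y
  · simpa only [dist_comm] using this y hy x hx (le_of_not_ge hxy)
  rcases hxy.eq_or_lt with rfl | hlt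
  · simp
  have hIcc : Icc x y ⊆ s := hs.ordConnected.out hx hy
  have hIoo : Ioo x y ⊆ interior s := by
    simpa only [interior_Icc] using interior_mono hIcc
  obtain ⟨c, hc, hslope⟩ := exists_deriv_eq_slope f hlt (hfc.mono hIcc) (hfd.mono hIoo)
  have hc_le : |deriv f c| ≤ C := by
    rw [← Real.norm_eq_abs, ← coe_nnnorm]; exact_mod_cast bound c (hIoo hc)
  rw [eq_div_iff (sub_pos.2 hlt).ne'] at hslope
  rw [Real.dist_eq, Real.dist_eq, abs_sub_comm, ← hslope, abs_mul, abs_sub_comm x,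
    abs_of_pos (sub_pos.2 hlt)]
  gcongr

theorem LinearMap.IsSymmetric.norm_sub_smul_apply_sq_le {E : Type*} [NormedAddCommGroup E]
    [InnerProductSpace ℝ E] [FiniteDimensional ℝ E] {T : E →ₗ[ℝ] E} (hT : T.IsSymmetric)
    {ε γ : ℝ} (hγ : ∀ μ : ℝ, μ ≠ 0 → Module.End.HasEigenvalue T μ → |1 - ε * μ| ≤ γ)
    {u : E} (hu : u ∈ (LinearMap.ker T)ᗮ) :
    ‖u - ε • T u‖ ^ 2 ≤ γ ^ 2 * ‖u‖ ^ 2 := by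
  let b := hT.eigenvectorBasis rfl
  have happly : ∀ i, T (b i) = hT.eigenvalues rfl i • b i := hT.apply_eigenvectorBasis rfl
  have hcoeff : ∀ i, ⟪b i, u - ε • T u⟫ = (1 - ε * hT.eigenvalues rfl i) * ⟪b i, u⟫ := fun i => by
    rw [inner_sub_right, inner_smul_right, ← hT, happly, real_inner_smul_left]
    ring
  rw [← b.sum_sq_inner_right, ← b.sum_sq_inner_right, Finset.mul_sum]
  gcongr with i
  rw [hcoeff, mul_pow]
  by_cases hev : hT.eigenvalues rfl i = 0
  · have hker : b i ∈ LinearMap.ker T := by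
      rw [LinearMap.mem_ker, happly, hev, zero_smul]
    simp [Submodule.inner_right_of_mem_orthogonal hker hu]
  · have := abs_le.1 (hγ _ hev (hT.hasEigenvalue_eigenvalues rfl i))
    exact mul_le_mul_of_nonneg_right (sq_le_sq' this.1 this.2) (sq_nonneg _)

theorem Matrix.of_mul_div_mulVec {ι : Type*} [Fintype ι] (a : ι → ℝ) (M : Matrix ι ι ℝ)
    (u : ι → ℝ) : (of fun i j => a i * M i j / a j) *ᵥ u = a * M *ᵥ (a⁻¹ * u) := by
  ext i
  simp only [mulVec, dotProduct, Finset.mul_sum, Pi.mul_apply, Pi.inv_apply, of_apply]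
  exact Finset.sum_congr rfl fun j _ => by rw [div_eq_mul_inv]; ring

theorem Matrix.isHermitian_sqrt_mul_div_sqrt {ι : Type*} {w : ι → ℝ} (hw : ∀ i, 0 < w i)
    {M : Matrix ι ι ℝ} (hM : ∀ i j, w i * M i j = w j * M j i) :
    (of fun i j => √(w i) * M i j / √(w j)).IsHermitian := by
  ext i j
  have := hM j i
  rw [← Real.sq_sqrt (hw i).le, ← Real.sq_sqrt (hw j).le] at this
  simp only [conjTranspose_apply, star_trivial, of_apply]
  rw [div_eq_div_iff (Real.sqrt_pos.2 (hw i)).ne' (Real.sqrt_pos.2 (hw j)).ne']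
  linear_combination this

theorem Matrix.sum_mul_sq_one_sub_smul_mulVec_le {ι : Type*} [Fintype ι] [DecidableEq ι]
    {w : ι → ℝ} (hw : ∀ i, 0 < w i) {M : Matrix ι ι ℝ} (hM : ∀ i j, w i * M i j = w j * M j i)
    {ε γ : ℝ} (hγ : ∀ μ : ℝ, μ ≠ 0 → (∃ v, v ≠ 0 ∧ M *ᵥ v = μ • v) → |1 - ε * μ| ≤ γ)
    {v : ι → ℝ} (hv : ∀ u, M *ᵥ u = 0 → ∑ i, w i * u i * v i = 0) :
    ∑ i, w i * ((1 - ε • M) *ᵥ v) i ^ 2 ≤ γ ^ 2 * ∑ i, w i * v i ^ 2 := by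
  set s : ι → ℝ := fun i => √(w i)
  have hs : ∀ i, s i ≠ 0 := fun i => (Real.sqrt_pos.2 (hw i)).ne'
  have hss : ∀ i, s i ^ 2 = w i := fun i => Real.sq_sqrt (hw i).le
  let S : Matrix ι ι ℝ := of fun i j => s i * M i j / s j
  have hSmulVec : ∀ u, S *ᵥ u = s * M *ᵥ (s⁻¹ * u) := of_mul_div_mulVec s M
  have hcancel : ∀ u, s⁻¹ * (s * u) = u := fun u => by
    ext i; simp [hs i]
  have hnorm : ∀ y, ‖WithLp.toLp 2 (s * y)‖ ^ 2 = ∑ i, w i * y i ^ 2 := fun y => by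
    simp [EuclideanSpace.real_norm_sq_eq, mul_pow, hss]
  have hT := isSymmetric_toEuclideanLin_iff.2 (isHermitian_sqrt_mul_div_sqrt hw hM)
  have key := hT.norm_sub_smul_apply_sq_le (ε := ε) (γ := γ) ?eigen (u := WithLp.toLp 2 (s * v))
    ?orth
  case eigen =>
    rintro μ hμ hev
    obtain ⟨y, hy⟩ := hev.exists_hasEigenvector
    refine hγ μ hμ ⟨s⁻¹ * y.ofLp, fun h => hy.2 ?_, ?_⟩
    · ext i
      simpa [hs i] using congrFun h i
    · have h : s * M *ᵥ (s⁻¹ * y.ofLp) = μ • y.ofLp := by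
        rw [← hSmulVec]; exact congrArg WithLp.ofLp hy.apply_eq_smul
      rw [← hcancel (M *ᵥ _), h, mul_smul_comm]
  case orth =>
    rw [Submodule.mem_orthogonal]
    intro y hy
    have h : s * M *ᵥ (s⁻¹ * y.ofLp) = 0 := by
      rw [← hSmulVec]; exact congrArg WithLp.ofLp hy
    have hker : M *ᵥ (s⁻¹ * y.ofLp) = 0 := by rw [← hcancel (M *ᵥ _), h, mul_zero]
    rw [← hv _ hker]
    simp only [PiLp.inner_apply, RCLike.inner_apply, conj_trivial, Pi.mul_apply, Pi.inv_apply]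
    refine Finset.sum_congr rfl fun i _ => ?_
    rw [← hss i]
    field_simp [hs i]
  have hstep : WithLp.toLp 2 (s * v) - ε • toEuclideanLin S (WithLp.toLp 2 (s * v))
      = WithLp.toLp 2 (s * ((1 - ε • M) *ᵥ v)) := by
    ext i
    simp [hSmulVec, hcancel, sub_mulVec, smul_mulVec, toLpLin_toLp]
    ring
  rwa [hstep, hnorm, hnorm] at key

section WeightedVariance

variable {ι : Type*} [Fintype ι]

noncomputable def weightedVariance (w x : ι → ℝ) : ℝ :=
  ∑ i, w i * (x i - univ.centerMass w x) ^ 2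

theorem sum_mul_sub_centerMass_eq_zero {w : ι → ℝ} (hw : ∑ i, w i ≠ 0) (x : ι → ℝ) :
    ∑ i, w i * (x i - univ.centerMass w x) = 0 := by
  simp only [centerMass, smul_eq_mul, mul_sub, sum_sub_distrib, ← sum_mul]
  field_simp
  ring

theorem weightedVariance_le_sum_mul_sq_sub {w : ι → ℝ} (hw : 0 < ∑ i, w i) (x : ι → ℝ) (c : ℝ) :
    weightedVariance w x ≤ ∑ i, w i * (x i - c) ^ 2 := by
  set m := univ.centerMass w x
  have hexpand : ∑ i, w i * (x i - c) ^ 2 = weightedVariance w x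
      + 2 * (m - c) * ∑ i, w i * (x i - m) + (m - c) ^ 2 * ∑ i, w i := by
    simp only [weightedVariance, mul_sum, ← sum_add_distrib]
    exact sum_congr rfl fun i _ => by ring
  rw [hexpand, sum_mul_sub_centerMass_eq_zero hw.ne', mul_zero, add_zero]
  have := mul_nonneg (sq_nonneg (m - c)) hw.le
  linarith

theorem weightedVariance_nonneg {w : ι → ℝ} (hw : ∀ i, 0 ≤ w i) (x : ι → ℝ) :
    0 ≤ weightedVariance w x :=
  sum_nonneg fun i _ => mul_nonneg (hw i) (sq_nonneg _)

theorem infDist_range_const_le_sqrt_weightedVariance {w : ι → ℝ} (hw : ∀ i, 1 ≤ w i)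
    (x : ι → ℝ) :
    Metric.infDist (WithLp.toLp 2 x : EuclideanSpace ℝ ι)
      (range fun c : ℝ => (WithLp.toLp 2 fun _ => c : EuclideanSpace ℝ ι))
      ≤ √(weightedVariance w x) := by
  set m := univ.centerMass w x
  calc _ ≤ dist (WithLp.toLp 2 x : EuclideanSpace ℝ ι) (WithLp.toLp 2 fun _ => m) :=
        Metric.infDist_le_dist_of_mem (mem_range_self m)
    _ = √(∑ i, (x i - m) ^ 2) := by simp [EuclideanSpace.dist_eq, Real.dist_eq, sq_abs]
    _ ≤ √(weightedVariance w x) :=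
        Real.sqrt_le_sqrt (sum_le_sum fun i _ => le_mul_of_one_le_left (sq_nonneg _) (hw i))

theorem weightedVariance_one_sub_smul_mulVec_comp_le [DecidableEq ι] [Nonempty ι]
    {w : ι → ℝ} (hw : ∀ i, 0 < w i) {M : Matrix ι ι ℝ} (hM1 : M *ᵥ (fun _ => 1) = 0)
    (hMw : ∀ i j, w i * M i j = w j * M j i) (hker : ∀ u, M *ᵥ u = 0 → ∃ c, u = fun _ => c)
    {ε γ : ℝ} (hγ : ∀ μ : ℝ, μ ≠ 0 → (∃ v, v ≠ 0 ∧ M *ᵥ v = μ • v) → |1 - ε * μ| ≤ γ)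
    {s : Set ℝ} (hs : Convex ℝ s) {f : ℝ → ℝ} {K : ℝ≥0} (hf : LipschitzOnWith K f s)
    {x : ι → ℝ} (hx : ∀ i, x i ∈ s) :
    weightedVariance w ((1 - ε • M) *ᵥ fun i => f (x i)) ≤ (γ * K) ^ 2 * weightedVariance w x := by
  have hW : 0 < ∑ i, w i := sum_pos (fun i _ => hw i) univ_nonempty
  set m := univ.centerMass w x
  have hm : m ∈ s := hs.centerMass_mem (fun i _ => (hw i).le) hW fun i _ => hx i
  set g : ι → ℝ := fun i => f (x i) - f m
  set a := univ.centerMass w g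
  set h : ι → ℝ := fun i => g i - a
  have hconst : ∀ c : ℝ, (1 - ε • M) *ᵥ (fun _ => c) = fun _ => c := fun c => by
    have : (fun _ : ι => c) = c • fun _ => (1 : ℝ) := by ext; simp
    rw [this, mulVec_smul, sub_mulVec, one_mulVec, smul_mulVec, hM1, smul_zero, sub_zero]
  have hsplit : (1 - ε • M) *ᵥ (fun i => f (x i)) = (fun _ => f m + a) + (1 - ε • M) *ᵥ h := by
    rw [← hconst, ← mulVec_add]
    congr 1
    ext i
    simp only [Pi.add_apply, h, g]
    ring
  have hh : ∀ u, M *ᵥ u = 0 → ∑ i, w i * u i * h i = 0 := fun u hu => by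
    obtain ⟨c, rfl⟩ := hker u hu
    have hmean : ∑ i, w i * h i = 0 := sum_mul_sub_centerMass_eq_zero hW.ne' g
    simp only [mul_comm _ c, mul_assoc, ← mul_sum, hmean, mul_zero]
  have hlip : ∀ i, g i ^ 2 ≤ K ^ 2 * (x i - m) ^ 2 := fun i => by
    rw [← mul_pow]
    apply sq_le_sq.2
    rw [abs_mul, NNReal.abs_eq, ← Real.dist_eq, ← Real.dist_eq]
    exact hf.dist_le_mul (x i) (hx i) m hm
  calc weightedVariance w ((1 - ε • M) *ᵥ fun i => f (x i))
      ≤ ∑ i, w i * (((1 - ε • M) *ᵥ fun i => f (x i)) i - (f m + a)) ^ 2 :=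
        weightedVariance_le_sum_mul_sq_sub hW _ _
    _ = ∑ i, w i * ((1 - ε • M) *ᵥ h) i ^ 2 := by simp [hsplit]
    _ ≤ γ ^ 2 * ∑ i, w i * h i ^ 2 := sum_mul_sq_one_sub_smul_mulVec_le hw hMw hγ hh
    _ ≤ γ ^ 2 * ∑ i, w i * (g i - 0) ^ 2 :=
        mul_le_mul_of_nonneg_left (weightedVariance_le_sum_mul_sq_sub hW g 0) (sq_nonneg γ)
    _ ≤ γ ^ 2 * ∑ i, w i * (K ^ 2 * (x i - m) ^ 2) := by
        simp only [sub_zero]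
        gcongr with i
        · exact (hw i).le
        · exact hlip i
    _ = (γ * K) ^ 2 * weightedVariance w x := by
        simp only [weightedVariance, mul_sum]
        exact sum_congr rfl fun i _ => by ring

end WeightedVariance

theorem tendsto_nhds_zero_of_succ_le_mul {u : ℕ → ℝ} {c : ℝ} (hc0 : 0 ≤ c) (hc1 : c < 1)
    (hu : ∀ n, 0 ≤ u n) (h : ∀ n, u (n + 1) ≤ c * u n) : Tendsto u atTop (𝓝 0) :=
  squeeze_zero hu (fun n => le_geom hc0 n fun k _ => h k) <| by
    simpa using (tendsto_pow_atTop_nhds_zero_of_lt_one hc0 hc1).mul_const (u 0)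

theorem exists_abs_one_sub_mul_le_of_mem_Ioo {a b F ε : ℝ} (ha : 0 < a) (hab : a ≤ b)
    (hF : 1 ≤ F) (hε : ε ∈ Ioo (a⁻¹ * (1 - 1 / F)) (b⁻¹ * (1 + 1 / F))) :
    ∃ γ, 0 ≤ γ ∧ γ * F < 1 ∧ ∀ μ ∈ Icc a b, |1 - ε * μ| ≤ γ := by
  have hF0 : 0 < F := one_pos.trans_le hF
  have hb : 0 < b := ha.trans_le hab
  have hε0 : 0 ≤ ε := by
    refine le_trans (mul_nonneg (inv_nonneg.2 ha.le) ?_) hε.1.le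
    rw [sub_nonneg, div_le_one hF0]; exact hF
  have hεa : 1 - 1 / F < ε * a := by
    have := mul_lt_mul_of_pos_right hε.1 ha
    rwa [mul_comm a⁻¹, mul_assoc, inv_mul_cancel₀ ha.ne', mul_one] at this
  have hεb : ε * b < 1 + 1 / F := by
    have := mul_lt_mul_of_pos_right hε.2 hb
    rwa [mul_comm b⁻¹, mul_assoc, inv_mul_cancel₀ hb.ne', mul_one] at this
  have hεab : ε * a ≤ ε * b := mul_le_mul_of_nonneg_left hab hε0
  refine ⟨max |1 - ε * a| |1 - ε * b|, (abs_nonneg _).trans (le_max_left _ _), ?_,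
    fun μ hμ => ?_⟩
  · rw [← lt_div_iff₀ hF0]
    refine max_lt ?_ ?_ <;> rw [abs_lt] <;> constructor <;> linarith
  · rw [max_comm]
    exact abs_le_max_abs_abs (sub_le_sub_left (mul_le_mul_of_nonneg_left hμ.2 hε0) 1)
      (sub_le_sub_left (mul_le_mul_of_nonneg_left hμ.1 hε0) 1)

namespace SimpleGraph

variable {V : Type*} [Fintype V] [DecidableEq V] (G : SimpleGraph V) [DecidableRel G.Adj]

noncomputable def normalizedLapMatrix : Matrix V V ℝ :=
  1 - diagonal (fun i => (G.degree i : ℝ)⁻¹) * G.adjMatrix ℝ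

variable {G}

theorem normalizedLapMatrix_eq_diagonal_mul_lapMatrix (hG : ∀ i, 0 < G.degree i) :
    G.normalizedLapMatrix = diagonal (fun i => (G.degree i : ℝ)⁻¹) * G.lapMatrix ℝ := by
  rw [normalizedLapMatrix, lapMatrix, degMatrix, mul_sub, diagonal_mul_diagonal]
  congr
  ext i j
  simp [one_apply, diagonal_apply, (hG _).ne']

theorem normalizedLapMatrix_mulVec_const (hG : ∀ i, 0 < G.degree i) :
    G.normalizedLapMatrix *ᵥ (fun _ => 1) = 0 := by
  rw [normalizedLapMatrix_eq_diagonal_mul_lapMatrix hG, ← mulVec_mulVec,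
    lapMatrix_mulVec_const_eq_zero, mulVec_zero]

theorem degree_mul_normalizedLapMatrix_comm (hG : ∀ i, 0 < G.degree i) (i j : V) :
    G.degree i * G.normalizedLapMatrix i j = G.degree j * G.normalizedLapMatrix j i := by
  simp only [normalizedLapMatrix_eq_diagonal_mul_lapMatrix hG, diagonal_mul]
  rw [← mul_assoc, ← mul_assoc, mul_inv_cancel₀ (Nat.cast_ne_zero.2 (hG i).ne'),
    mul_inv_cancel₀ (Nat.cast_ne_zero.2 (hG j).ne'), one_mul, one_mul]
  exact (isSymm_lapMatrix ℝ G).apply j i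

theorem Connected.exists_eq_const_of_normalizedLapMatrix_mulVec_eq_zero (hconn : G.Connected)
    (hG : ∀ i, 0 < G.degree i) {u : V → ℝ} (hu : G.normalizedLapMatrix *ᵥ u = 0) :
    ∃ c, u = fun _ => c := by
  have hlap : G.lapMatrix ℝ *ᵥ u = 0 := by
    ext i
    have := congrFun hu i
    rw [normalizedLapMatrix_eq_diagonal_mul_lapMatrix hG, ← mulVec_mulVec, mulVec_diagonal]
      at this
    simpa [(hG i).ne'] using this
  obtain ⟨i₀⟩ := hconn.nonempty
  exact ⟨u i₀, funext fun i =>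
    (lapMatrix_mulVec_eq_zero_iff_forall_reachable G).1 hlap i i₀ (hconn.preconnected i i₀)⟩

end SimpleGraph

theorem synchronization_sufficient_condition_general (n : ℕ) (hn : 2 ≤ n)
    (G : SimpleGraph (Fin n)) [DecidableRel G.Adj] (hconn : G.Connected)
    (L : Matrix (Fin n) (Fin n) ℝ)
    (hL : L = 1 - (Matrix.diagonal fun i => ((G.degree i : ℝ))⁻¹) * G.adjMatrix ℝ)
    (f : ℝ → ℝ) (hf : ContDiffOn ℝ 2 f (Set.Icc 0 1))
    (F : ℝ) (hF : IsGreatest ((fun t => |deriv f t|) '' Set.Icc (0 : ℝ) 1) F)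
    (hF1 : 1 < F)
    (lam2 lamn : ℝ) (h2pos : 0 < lam2)
    (hlam2 : IsLeast {μ : ℝ | μ ≠ 0 ∧ ∃ v : Fin n → ℝ, v ≠ 0 ∧ L *ᵥ v = μ • v} lam2)
    (hlamn : IsGreatest {μ : ℝ | μ ≠ 0 ∧ ∃ v : Fin n → ℝ, v ≠ 0 ∧ L *ᵥ v = μ • v} lamn)
    (ε : ℝ) (hε : ε ∈ Set.Ioo (lam2⁻¹ * (1 - 1 / F)) (lamn⁻¹ * (1 + 1 / F)))
    (D : Set (EuclideanSpace ℝ (Fin n)))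
    (hD : D = Set.range fun c : ℝ => ((WithLp.toLp 2 fun _ => c) : EuclideanSpace ℝ (Fin n))) :
    ∃ δ > (0 : ℝ), ∀ x : ℕ → Fin n → ℝ,
      (∀ k i, x k i ∈ Set.Icc (0 : ℝ) 1) →
      (∀ k, x (k + 1) = (1 - ε • L) *ᵥ fun i => f (x k i)) →
      Metric.infDist ((WithLp.equiv 2 (Fin n → ℝ)).symm (x 0)) D < δ →
      Filter.Tendsto (fun k => Metric.infDist ((WithLp.equiv 2 (Fin n → ℝ)).symm (x k)) D)
        Filter.atTop (nhds 0) := by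
  have : Nontrivial (Fin n) := Fin.nontrivial_iff_two_le.2 hn
  have hdeg : ∀ i, 0 < G.degree i := fun i => hconn.preconnected.degree_pos_of_nontrivial i
  have hd : ∀ i, (0 : ℝ) < G.degree i := fun i => Nat.cast_pos.2 (hdeg i)
  change L = G.normalizedLapMatrix at hL
  subst hL hD
  have hF0 : 0 ≤ F := by linarith
  have hlip : LipschitzOnWith F.toNNReal f (Icc 0 1) :=
    (convex_Icc 0 1).lipschitzOnWith_of_nnnorm_deriv_le_of_interior hf.continuousOn
      ((hf.differentiableOn two_ne_zero).mono interior_subset) fun t ht => by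
        rw [Real.le_toNNReal_iff_coe_le hF0, coe_nnnorm, Real.norm_eq_abs]
        exact hF.2 ⟨t, interior_subset ht, rfl⟩
  obtain ⟨γ, hγ0, hγF, hγ⟩ :=
    exists_abs_one_sub_mul_le_of_mem_Ioo h2pos (hlam2.2 hlamn.1) hF1.le hε
  refine ⟨1, one_pos, fun x hx hrec _ => ?_⟩
  have hvar :
      Tendsto (fun k => weightedVariance (fun i => (G.degree i : ℝ)) (x k)) atTop (𝓝 0) := by
    refine tendsto_nhds_zero_of_succ_le_mul (sq_nonneg (γ * F))
      (pow_lt_one₀ (mul_nonneg hγ0 hF0) hγF two_ne_zero)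
      (fun k => weightedVariance_nonneg (fun i => (hd i).le) (x k)) fun k => ?_
    rw [hrec k, ← Real.coe_toNNReal F hF0]
    exact weightedVariance_one_sub_smul_mulVec_comp_le hd
      (G.normalizedLapMatrix_mulVec_const hdeg) (G.degree_mul_normalizedLapMatrix_comm hdeg)
      (fun u => hconn.exists_eq_const_of_normalizedLapMatrix_mulVec_eq_zero hdeg)
      (fun μ hμ hv => hγ μ ⟨hlam2.2 ⟨hμ, hv⟩, hlamn.2 ⟨hμ, hv⟩⟩) (convex_Icc 0 1) hlip (hx k)
  refine squeeze_zero (fun _ => Metric.infDist_nonneg) (fun k =>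
    infDist_range_const_le_sqrt_weightedVariance (fun i => Nat.one_le_cast.2 (hdeg i)) (x k)) ?_
  simpa using hvar.sqrt

/-- Synchronization theorem: if `f : [0,1] → [0,1]` is C², `F = max |f'| > 1`,
the nonzero eigenvalues of the normalized Laplacian of the connected graph `Γ`
satisfy `λ_n / λ_2 < 1 + 1/F`, and
`ε ∈ (λ_2⁻¹ (1 - 1/F), λ_n⁻¹ (1 + 1/F))`, then the synchronous (diagonal)
subspace is locally asymptotically stable for `x_{k+1} = (I - εL) f(x_k)`:
there is `δ > 0` such that any trajectory starting within distance `δ` of the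
diagonal converges to it. -/
theorem synchronization_sufficient_condition (n : ℕ) (hn : 2 ≤ n)
    (G : SimpleGraph (Fin n)) [DecidableRel G.Adj] (hconn : G.Connected)
    (L : Matrix (Fin n) (Fin n) ℝ)
    (hL : L = 1 - (Matrix.diagonal fun i => ((G.degree i : ℝ))⁻¹) * G.adjMatrix ℝ)
    (f : ℝ → ℝ) (hf : ContDiffOn ℝ 2 f (Set.Icc 0 1))
    (hmaps : Set.MapsTo f (Set.Icc 0 1) (Set.Icc 0 1))
    (F : ℝ) (hF : IsGreatest ((fun t => |deriv f t|) '' Set.Icc (0 : ℝ) 1) F)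
    (hF1 : 1 < F)
    (lam2 lamn : ℝ) (h2pos : 0 < lam2)
    (hlam2 : IsLeast {μ : ℝ | μ ≠ 0 ∧ ∃ v : Fin n → ℝ, v ≠ 0 ∧ L *ᵥ v = μ • v} lam2)
    (hlamn : IsGreatest {μ : ℝ | μ ≠ 0 ∧ ∃ v : Fin n → ℝ, v ≠ 0 ∧ L *ᵥ v = μ • v} lamn)
    (hratio : lamn / lam2 < 1 + 1 / F)
    (ε : ℝ) (hε : ε ∈ Set.Ioo (lam2⁻¹ * (1 - 1 / F)) (lamn⁻¹ * (1 + 1 / F)))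
    (D : Set (EuclideanSpace ℝ (Fin n)))
    (hD : D = Set.range fun c : ℝ => ((WithLp.toLp 2 fun _ => c) : EuclideanSpace ℝ (Fin n))) :
    ∃ δ > (0 : ℝ), ∀ x : ℕ → Fin n → ℝ,
      (∀ k i, x k i ∈ Set.Icc (0 : ℝ) 1) →
      (∀ k, x (k + 1) = (1 - ε • L) *ᵥ fun i => f (x k i)) →
      Metric.infDist ((WithLp.equiv 2 (Fin n → ℝ)).symm (x 0)) D < δ →
      Filter.Tendsto (fun k => Metric.infDist ((WithLp.equiv 2 (Fin n → ℝ)).symm (x k)) D)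
        Filter.atTop (nhds 0) :=
  synchronization_sufficient_condition_general n hn G hconn L hL f hf F hF hF1 lam2 lamn h2pos hlam2
    hlamn ε hε D hD
end

section
/- For the cycle graph on n vertices, the ratio of the largest to the smallest positive eigenvalue of the normalized Laplacian satisfies λ_max/λ_min ≥ n²/π² for all n ≥ 3; in particular, for F > 1 fixed, the synchronization condition λ_max/λ_min < 1 + 1/F fails for all sufficiently large n. -/
open Real

/-! Whatever the parity of `n`, `λ_max ≥ 1 + cos x` with `x = π/n`, and
`λ_min = 1 - cos 2x = 2 (1 - cos x)(1 + cos x)`, so `λ_max / λ_min ≥ 1 / (2 (1 - cos x))`,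
which is at least `1 / x² = n²/π²` because `1 - cos x ≤ x²/2`. Once `n ≥ 5` this exceeds
`2 > 1 + 1/F`. -/

noncomputable def cycleLambdaMax (n : ℕ) : ℝ := if Even n then 2 else 1 + cos (π / n)

noncomputable def cycleLambdaMin (n : ℕ) : ℝ := 1 - cos (2 * π / n)

lemma one_add_cos_div_le_cycleLambdaMax (n : ℕ) : 1 + cos (π / n) ≤ cycleLambdaMax n := by
  unfold cycleLambdaMax
  split_ifs
  · linarith [cos_le_one (π / n)]
  · rfl

lemma one_sub_cos_two_mul_eq (x : ℝ) : 1 - cos (2 * x) = 2 * sin x ^ 2 := by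
  rw [cos_two_mul, cos_sq']; ring

lemma inv_sq_le_one_add_cos_div_one_sub_cos_two_mul {x : ℝ} (hx : sin x ≠ 0) :
    (x ^ 2)⁻¹ ≤ (1 + cos x) / (1 - cos (2 * x)) := by
  have hsin : 0 < sin x ^ 2 := by positivity
  have hcos_lt : cos x < 1 := by nlinarith [sin_sq_add_cos_sq x, neg_one_le_cos x]
  have hcos_gt : -1 < cos x := by nlinarith [sin_sq_add_cos_sq x, cos_le_one x]
  have hratio : (1 + cos x) / (1 - cos (2 * x)) = (2 * (1 - cos x))⁻¹ := by
    rw [one_sub_cos_two_mul_eq, sin_sq, show 1 - cos x ^ 2 = (1 - cos x) * (1 + cos x) by ring]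
    field_simp [(by linarith : 1 + cos x ≠ 0), (by linarith : 1 - cos x ≠ 0)]
  rw [hratio]
  exact inv_anti₀ (by linarith) (by linarith [one_sub_sq_div_two_le_cos (x := x)])

lemma sq_div_pi_sq_le_cycleLambdaMax_div_cycleLambdaMin {n : ℕ} (hn : 2 ≤ n) :
    (n : ℝ) ^ 2 / π ^ 2 ≤ cycleLambdaMax n / cycleLambdaMin n := by
  have hn0 : (0 : ℝ) < n := by positivity
  set x := π / n with hx
  have hsin : 0 < sin x :=
    sin_pos_of_pos_of_lt_pi (div_pos pi_pos hn0) (div_lt_self pi_pos (by exact_mod_cast hn))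
  have hmin : cycleLambdaMin n = 1 - cos (2 * x) := by rw [cycleLambdaMin, mul_div_assoc]
  calc (n : ℝ) ^ 2 / π ^ 2 = (x ^ 2)⁻¹ := by rw [hx]; field_simp
    _ ≤ (1 + cos x) / (1 - cos (2 * x)) := inv_sq_le_one_add_cos_div_one_sub_cos_two_mul hsin.ne'
    _ ≤ cycleLambdaMax n / cycleLambdaMin n := by
      rw [hmin, one_sub_cos_two_mul_eq]
      gcongr
      exact one_add_cos_div_le_cycleLambdaMax n

lemma two_le_sq_div_pi_sq {n : ℕ} (hn : 5 ≤ n) : 2 ≤ (n : ℝ) ^ 2 / π ^ 2 := by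
  have hn5 : (5 : ℝ) ≤ n := by exact_mod_cast hn
  rw [le_div_iff₀ (by positivity)]
  nlinarith [pi_lt_d2, pi_pos]

/-- For the cycle graph on `n ≥ 3` vertices (with `λ_min = 1 - cos (2π/n)` and
`λ_max = 2` for even `n`, `1 + cos (π/n)` for odd `n`), the eigenvalue ratio
satisfies `λ_max / λ_min ≥ n²/π²`; in particular, for any fixed `F > 1` the
synchronization condition `λ_max / λ_min < 1 + 1/F` fails for all sufficiently
large `n`. -/
theorem cycle_eigenvalue_ratio_large :
    (∀ n : ℕ, 3 ≤ n →
      (n : ℝ) ^ 2 / π ^ 2 ≤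
        (if Even n then 2 else 1 + Real.cos (π / n)) / (1 - Real.cos (2 * π / n))) ∧
    ∀ F : ℝ, 1 < F → ∃ N : ℕ, ∀ n : ℕ, N ≤ n → 3 ≤ n →
      ¬ ((if Even n then 2 else 1 + Real.cos (π / n)) / (1 - Real.cos (2 * π / n))
          < 1 + 1 / F) := by
  refine ⟨fun n hn => sq_div_pi_sq_le_cycleLambdaMax_div_cycleLambdaMin (by omega),
    fun F hF => ⟨5, fun n hn _ hsync => ?_⟩⟩
  change cycleLambdaMax n / cycleLambdaMin n < 1 + 1 / F at hsync
  have hF_inv : 1 / F < 1 := (div_lt_one (by linarith)).mpr hF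
  have hratio := sq_div_pi_sq_le_cycleLambdaMax_div_cycleLambdaMin (n := n) (by omega)
  linarith [two_le_sq_div_pi_sq hn]
end
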